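/- Let 0 < s < 1/2 and let f ∈ L²(ℝ). Then the sum over dyadic N ∈ 2^ℕ of N^{2s} ∫ w(ξ,N)|f̂(ξ)|² dξ is bounded above by a constant (depending only on s) times the square of the inhomogeneous Besov norm ‖f‖²_{B^s_{2,2}} = Σ_M M^{2s} ‖P_M f‖²_{L²} (with P_M the Littlewood–Paley projections onto frequencies |ξ| ≈ M, including M = 1 for |ξ| ≤ 1). -/

import Mathlib

open MeasureTheory

/-- The weight `w(ξ,κ) = 3κ²ξ²/(4(ξ²+κ²)(ξ²+4κ²))`. -/
noncomputable def w (ξ κ : ℝ) : ℝ :=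
  3 * κ ^ 2 * ξ ^ 2 / (4 * (ξ ^ 2 + κ ^ 2) * (ξ ^ 2 + 4 * κ ^ 2))

/-- The `k`-th Littlewood–Paley frequency region: `{|ξ| ≤ 1}` for `k = 0`,
`{2^{k-1} < |ξ| ≤ 2^k}` for `k ≥ 1`. -/
def LPregion (k : ℕ) : Set ℝ :=
  if k = 0 then {ξ : ℝ | |ξ| ≤ 1}
  else {ξ : ℝ | (2 : ℝ) ^ (k - 1) < |ξ| ∧ |ξ| ≤ (2 : ℝ) ^ k}

/-!
On the `k`-th Littlewood–Paley region `w(ξ, 2ⁿ) ≤ min(ξ²/4ⁿ, 4ⁿ/ξ²) ≤ 4 · 4^{-|n-k|}`, while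
`2^{2sn} ≤ 2^{2sk} · 2^{|n-k|}` because `|2s| ≤ 1`. Splitting every integral over the regions
therefore dominates the left-hand side by a double sum with kernel `4 · 2^{-|n-k|}`, whose sums
over `n` are at most `12` (Schur's test).

If the Besov sum diverges, its `tsum` is `0`; then the lower bound `w(ξ, 2ᵏ) ≥ 3/160` on the
`k`-th region (`k ≥ 1`) shows that the left-hand sum diverges as well, so its `tsum` is `0` too.
-/

lemma w_nonneg (ξ κ : ℝ) : 0 ≤ w ξ κ := by
  unfold w; positivity

lemma w_le_one (ξ κ : ℝ) : w ξ κ ≤ 1 := by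
  rcases eq_or_ne κ 0 with rfl | hκ
  · simp [w]
  rw [w, div_le_one (by positivity)]
  nlinarith [sq_nonneg ξ, sq_nonneg κ, sq_nonneg (ξ * κ), sq_nonneg (ξ ^ 2)]

lemma w_le_sq_div_sq (ξ κ : ℝ) : w ξ κ ≤ ξ ^ 2 / κ ^ 2 := by
  rcases eq_or_ne κ 0 with rfl | hκ
  · simp [w]
  rw [w, div_le_div_iff₀ (by positivity) (by positivity)]
  nlinarith [sq_nonneg ξ, sq_nonneg κ, mul_nonneg (sq_nonneg ξ) (sq_nonneg κ),
    mul_nonneg (mul_nonneg (sq_nonneg ξ) (sq_nonneg κ)) (sq_nonneg ξ),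
    mul_nonneg (mul_nonneg (sq_nonneg ξ) (sq_nonneg ξ)) (sq_nonneg ξ)]

lemma w_le_sq_div_sq' (ξ κ : ℝ) : w ξ κ ≤ κ ^ 2 / ξ ^ 2 := by
  rcases eq_or_ne ξ 0 with rfl | hξ
  · simp [w]
  rcases eq_or_ne κ 0 with rfl | hκ
  · simp [w]
  rw [w, div_le_div_iff₀ (by positivity) (by positivity)]
  nlinarith [sq_nonneg ξ, sq_nonneg κ, mul_nonneg (sq_nonneg ξ) (sq_nonneg κ),
    mul_nonneg (mul_nonneg (sq_nonneg ξ) (sq_nonneg κ)) (sq_nonneg κ),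
    mul_nonneg (mul_nonneg (sq_nonneg κ) (sq_nonneg κ)) (sq_nonneg κ)]

lemma le_w_of_sq_le_of_lt {ξ κ : ℝ} (hle : ξ ^ 2 ≤ κ ^ 2) (hlt : κ ^ 2 < 4 * ξ ^ 2) :
    3 / 160 ≤ w ξ κ := by
  have hξ : 0 < ξ ^ 2 := by nlinarith [sq_nonneg κ]
  rw [w, le_div_iff₀ (by positivity)]
  nlinarith [mul_pos hξ hξ, sq_nonneg κ, mul_nonneg (sq_nonneg κ) hξ.le]

lemma continuous_w {κ : ℝ} (hκ : κ ≠ 0) : Continuous fun ξ => w ξ κ :=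
  (by fun_prop : Continuous fun ξ : ℝ => 3 * κ ^ 2 * ξ ^ 2).div (by fun_prop)
    fun ξ => by positivity

lemma measurableSet_LPregion (k : ℕ) : MeasurableSet (LPregion k) := by
  unfold LPregion
  split_ifs
  · exact measurableSet_le continuous_abs.measurable measurable_const
  · exact (measurableSet_lt measurable_const continuous_abs.measurable).inter
      (measurableSet_le continuous_abs.measurable measurable_const)

lemma abs_le_of_mem_LPregion {k : ℕ} {ξ : ℝ} (hξ : ξ ∈ LPregion k) : |ξ| ≤ 2 ^ k := by
  unfold LPregion at hξ
  split_ifs at hξ with hk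
  · simpa [hk] using hξ
  · exact hξ.2

lemma lt_abs_of_mem_LPregion {k : ℕ} (hk : k ≠ 0) {ξ : ℝ} (hξ : ξ ∈ LPregion k) :
    (2 : ℝ) ^ (k - 1) < |ξ| := by
  simp only [LPregion, hk, if_false] at hξ
  exact hξ.1

lemma sq_le_of_mem_LPregion {k : ℕ} {ξ : ℝ} (hξ : ξ ∈ LPregion k) :
    ξ ^ 2 ≤ ((2 : ℝ) ^ k) ^ 2 := by
  simpa only [sq_abs] using pow_le_pow_left₀ (abs_nonneg ξ) (abs_le_of_mem_LPregion hξ) 2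

lemma sq_lt_of_mem_LPregion {k : ℕ} (hk : k ≠ 0) {ξ : ℝ} (hξ : ξ ∈ LPregion k) :
    ((2 : ℝ) ^ k) ^ 2 < 4 * ξ ^ 2 := by
  have h := pow_lt_pow_left₀ (lt_abs_of_mem_LPregion hk hξ) (by positivity) two_ne_zero
  obtain ⟨m, rfl⟩ := Nat.exists_eq_succ_of_ne_zero hk
  rw [sq_abs, Nat.succ_sub_one] at h
  rw [pow_succ (2 : ℝ), mul_pow]
  linarith

lemma pairwise_disjoint_LPregion : Pairwise (Function.onFun Disjoint LPregion) := by
  have key : ∀ {i j : ℕ}, i < j → Disjoint (LPregion i) (LPregion j) := by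
    intro i j hij
    refine Set.disjoint_left.mpr fun ξ hi hj => ?_
    have := pow_le_pow_right₀ (one_le_two : (1 : ℝ) ≤ 2) (Nat.le_sub_one_of_lt hij)
    linarith [abs_le_of_mem_LPregion hi, lt_abs_of_mem_LPregion (by omega) hj]
  intro i j hij
  rcases hij.lt_or_gt with h | h
  exacts [key h, (key h).symm]

lemma iUnion_LPregion : ⋃ k, LPregion k = Set.univ := by
  refine Set.eq_univ_of_forall fun ξ => Set.mem_iUnion.mpr ?_
  classical
  have hex : ∃ k : ℕ, |ξ| ≤ 2 ^ k := (pow_unbounded_of_one_lt |ξ| one_lt_two).imp fun _ => le_of_lt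
  by_cases hk : Nat.find hex = 0
  · exact ⟨0, by simpa [LPregion, hk] using Nat.find_spec hex⟩
  · refine ⟨Nat.find hex, ?_⟩
    simp only [LPregion, hk, if_false]
    exact ⟨not_le.mp (Nat.find_min hex (by omega)), Nat.find_spec hex⟩

lemma hasSum_setIntegral_LPregion {E : Type*} [NormedAddCommGroup E] [NormedSpace ℝ E]
    {φ : ℝ → E} (hφ : Integrable φ) :
    HasSum (fun k => ∫ ξ in LPregion k, φ ξ) (∫ ξ, φ ξ) := by
  have h := hasSum_integral_iUnion measurableSet_LPregion pairwise_disjoint_LPregion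
    (by rw [iUnion_LPregion]; exact hφ.integrableOn)
  rwa [iUnion_LPregion, setIntegral_univ] at h

lemma two_pow_sq (d : ℕ) : ((2 : ℝ) ^ d) ^ 2 = 4 ^ d := by
  rw [← pow_mul, mul_comm, pow_mul]; norm_num

lemma w_two_pow_le_of_mem_LPregion {k : ℕ} {ξ : ℝ} (hξ : ξ ∈ LPregion k) (n : ℕ) :
    w ξ (2 ^ n) ≤ 4 * 4⁻¹ ^ ((n : ℤ) - k).natAbs := by
  rcases le_or_gt k n with hkn | hnk
  · obtain ⟨d, rfl⟩ := Nat.exists_eq_add_of_le hkn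
    have hd : ((↑(k + d) : ℤ) - k).natAbs = d := by omega
    calc w ξ (2 ^ (k + d)) ≤ ξ ^ 2 / ((2 : ℝ) ^ (k + d)) ^ 2 := w_le_sq_div_sq _ _
      _ ≤ ((2 : ℝ) ^ k) ^ 2 / ((2 : ℝ) ^ (k + d)) ^ 2 := by
          gcongr ?_ / _; exact sq_le_of_mem_LPregion hξ
      _ = 4⁻¹ ^ d := by rw [two_pow_sq, two_pow_sq, pow_add, inv_pow]; field_simp
      _ ≤ 4 * 4⁻¹ ^ ((↑(k + d) : ℤ) - k).natAbs := by
          rw [hd]; linarith [pow_nonneg (by norm_num : (0 : ℝ) ≤ 4⁻¹) d]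
  · obtain ⟨d, rfl⟩ := Nat.exists_eq_add_of_lt hnk
    have hd : ((n : ℤ) - ↑(n + d + 1)).natAbs = d + 1 := by omega
    have hlt := sq_lt_of_mem_LPregion (by omega) hξ
    have hξ0 : 0 < ξ ^ 2 := by nlinarith [sq_nonneg ((2 : ℝ) ^ (n + d + 1))]
    calc w ξ (2 ^ n) ≤ ((2 : ℝ) ^ n) ^ 2 / ξ ^ 2 := w_le_sq_div_sq' _ _
      _ ≤ 4 * ((2 : ℝ) ^ n) ^ 2 / ((2 : ℝ) ^ (n + d + 1)) ^ 2 := by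
          rw [div_le_div_iff₀ hξ0 (by positivity)]; nlinarith [sq_nonneg ((2 : ℝ) ^ n)]
      _ = 4 * 4⁻¹ ^ ((n : ℤ) - ↑(n + d + 1)).natAbs := by
          rw [hd, two_pow_sq, two_pow_sq, pow_add, pow_add, inv_pow]; field_simp; ring

lemma two_pow_rpow_le {t : ℝ} (ht : |t| ≤ 1) (n k : ℕ) :
    ((2 : ℝ) ^ n) ^ t ≤ ((2 : ℝ) ^ k) ^ t * 2 ^ ((n : ℤ) - k).natAbs := by
  have hexp : (n : ℝ) * t ≤ k * t + |(n : ℝ) - k| := by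
    have := (le_abs_self (((n : ℝ) - k) * t)).trans_eq (abs_mul _ _)
    nlinarith [abs_nonneg ((n : ℝ) - k)]
  rw [← Real.rpow_natCast_mul zero_le_two, ← Real.rpow_natCast_mul zero_le_two,
    ← Real.rpow_natCast, ← Real.rpow_add two_pos]
  refine Real.rpow_le_rpow_of_exponent_le one_le_two ?_
  simpa using hexp

lemma two_pow_rpow_mul_w_le {t : ℝ} (ht : |t| ≤ 1) {k : ℕ} {ξ : ℝ} (hξ : ξ ∈ LPregion k)
    (n : ℕ) :
    ((2 : ℝ) ^ n) ^ t * w ξ (2 ^ n) ≤ 4 * 2⁻¹ ^ ((n : ℤ) - k).natAbs * ((2 : ℝ) ^ k) ^ t :=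
  calc ((2 : ℝ) ^ n) ^ t * w ξ (2 ^ n)
      ≤ (((2 : ℝ) ^ k) ^ t * 2 ^ ((n : ℤ) - k).natAbs) * (4 * 4⁻¹ ^ ((n : ℤ) - k).natAbs) :=
        mul_le_mul (two_pow_rpow_le ht n k) (w_two_pow_le_of_mem_LPregion hξ n) (w_nonneg _ _)
          (by positivity)
    _ = 4 * (2 * 4⁻¹) ^ ((n : ℤ) - k).natAbs * ((2 : ℝ) ^ k) ^ t := by rw [mul_pow]; ring
    _ = 4 * 2⁻¹ ^ ((n : ℤ) - k).natAbs * ((2 : ℝ) ^ k) ^ t := by norm_num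

lemma hasSum_inv_two_pow_natAbs : HasSum (fun z : ℤ => (2 : ℝ)⁻¹ ^ z.natAbs) 3 := by
  have hnonneg : HasSum (fun n : ℕ => (2 : ℝ)⁻¹ ^ (n : ℤ).natAbs) 2 := by
    simpa using hasSum_geometric_two
  have hneg : HasSum (fun n : ℕ => (2 : ℝ)⁻¹ ^ (-((n : ℤ) + 1)).natAbs) 1 := by
    have h := hasSum_geometric_two.mul_right (2 : ℝ)⁻¹
    rw [show (2 : ℝ) * 2⁻¹ = 1 by norm_num] at h
    refine h.congr_fun fun n => ?_
    rw [Int.natAbs_neg, show ((n : ℤ) + 1).natAbs = n + 1 by omega, pow_succ, one_div]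
  have h := HasSum.of_nat_of_neg_add_one (f := fun z : ℤ => (2 : ℝ)⁻¹ ^ z.natAbs) hnonneg hneg
  rwa [show (2 : ℝ) + 1 = 3 by norm_num] at h

lemma sum_inv_two_pow_natAbs_sub_le (k : ℕ) (F : Finset ℕ) :
    ∑ n ∈ F, (2 : ℝ)⁻¹ ^ ((n : ℤ) - k).natAbs ≤ 3 := by
  let e : ℕ ↪ ℤ := ⟨fun n => (n : ℤ) - k, fun m n h => by simpa using h⟩
  exact (Finset.sum_map F e _).symm.trans_le
    (sum_le_hasSum _ (fun _ _ => by positivity) hasSum_inv_two_pow_natAbs)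

lemma tsum_le_mul_tsum_of_hasSum_le {ι κ : Type*} {a : ι → ℝ} {b : κ → ℝ} {c K : ι → κ → ℝ}
    {C : ℝ} (hb0 : ∀ k, 0 ≤ b k) (hb : Summable b) (hK0 : ∀ n k, 0 ≤ K n k)
    (hK : ∀ k (F : Finset ι), ∑ n ∈ F, K n k ≤ C) (hc : ∀ n, HasSum (c n) (a n))
    (hcK : ∀ n k, c n k ≤ K n k * b k) :
    ∑' n, a n ≤ C * ∑' k, b k := by
  have hKb : ∀ n, Summable fun k => K n k * b k := fun n =>
    .of_nonneg_of_le (fun k => mul_nonneg (hK0 n k) (hb0 k))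
      (fun k => mul_le_mul_of_nonneg_right (by simpa using hK k {n}) (hb0 k)) (hb.mul_left C)
  have hsum : ∀ F : Finset ι, ∑ n ∈ F, a n ≤ C * ∑' k, b k := fun F =>
    calc ∑ n ∈ F, a n ≤ ∑ n ∈ F, ∑' k, K n k * b k := Finset.sum_le_sum fun n _ =>
          (hc n).tsum_eq ▸ Summable.tsum_le_tsum (hcK n) (hc n).summable (hKb n)
      _ = ∑' k, (∑ n ∈ F, K n k) * b k := by
          simp_rw [Finset.sum_mul]; exact (Summable.tsum_finsetSum fun n _ => hKb n).symm
      _ ≤ ∑' k, C * b k := Summable.tsum_le_tsum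
          (fun k => mul_le_mul_of_nonneg_right (hK k F) (hb0 k))
          (by simpa only [Finset.sum_mul] using summable_sum fun n _ => hKb n) (hb.mul_left C)
      _ = C * ∑' k, b k := tsum_mul_left
  exact tsum_le_of_sum_le' (by simpa using hsum ∅) hsum

section

variable {g : ℝ → ℝ}

lemma integrable_w_mul (hg : Integrable g) {κ : ℝ} (hκ : κ ≠ 0) :
    Integrable fun ξ => w ξ κ * g ξ :=
  hg.bdd_mul (continuous_w hκ).aestronglyMeasurable (c := 1) <| .of_forall fun ξ => by
    rw [Real.norm_eq_abs, abs_of_nonneg (w_nonneg ξ κ)]; exact w_le_one ξ κ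

lemma two_pow_rpow_mul_setIntegral_le {t : ℝ} (ht : |t| ≤ 1) (hg : Integrable g)
    (hg0 : ∀ ξ, 0 ≤ g ξ) (n k : ℕ) :
    ((2 : ℝ) ^ n) ^ t * ∫ ξ in LPregion k, w ξ (2 ^ n) * g ξ
      ≤ 4 * 2⁻¹ ^ ((n : ℤ) - k).natAbs * (((2 : ℝ) ^ k) ^ t * ∫ ξ in LPregion k, g ξ) :=
  calc ((2 : ℝ) ^ n) ^ t * ∫ ξ in LPregion k, w ξ (2 ^ n) * g ξ
      = ∫ ξ in LPregion k, ((2 : ℝ) ^ n) ^ t * (w ξ (2 ^ n) * g ξ) := by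
        rw [integral_const_mul]
    _ ≤ ∫ ξ in LPregion k, 4 * 2⁻¹ ^ ((n : ℤ) - k).natAbs * ((2 : ℝ) ^ k) ^ t * g ξ :=
        setIntegral_mono_on
          ((integrable_w_mul hg (pow_ne_zero n two_ne_zero)).const_mul _).integrableOn
          (hg.const_mul _).integrableOn (measurableSet_LPregion k) fun ξ hξ => by
            rw [← mul_assoc]
            exact mul_le_mul_of_nonneg_right (two_pow_rpow_mul_w_le ht hξ n) (hg0 ξ)
    _ = 4 * 2⁻¹ ^ ((n : ℤ) - k).natAbs * (((2 : ℝ) ^ k) ^ t * ∫ ξ in LPregion k, g ξ) := by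
        rw [integral_const_mul]; ring

lemma setIntegral_LPregion_le (hg : Integrable g) (hg0 : ∀ ξ, 0 ≤ g ξ) {k : ℕ} (hk : k ≠ 0) :
    ∫ ξ in LPregion k, g ξ ≤ 160 / 3 * ∫ ξ, w ξ (2 ^ k) * g ξ :=
  calc ∫ ξ in LPregion k, g ξ = 160 / 3 * ∫ ξ in LPregion k, 3 / 160 * g ξ := by
        rw [integral_const_mul]; ring
    _ ≤ 160 / 3 * ∫ ξ in LPregion k, w ξ (2 ^ k) * g ξ := by
        refine mul_le_mul_of_nonneg_left ?_ (by norm_num)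
        exact setIntegral_mono_on (hg.const_mul _).integrableOn
          (integrable_w_mul hg (pow_ne_zero k two_ne_zero)).integrableOn
          (measurableSet_LPregion k) fun ξ hξ => mul_le_mul_of_nonneg_right
            (le_w_of_sq_le_of_lt (sq_le_of_mem_LPregion hξ) (sq_lt_of_mem_LPregion hk hξ))
            (hg0 ξ)
    _ ≤ 160 / 3 * ∫ ξ, w ξ (2 ^ k) * g ξ := by
        refine mul_le_mul_of_nonneg_left ?_ (by norm_num)
        exact setIntegral_le_integral (integrable_w_mul hg (pow_ne_zero k two_ne_zero))
          (.of_forall fun ξ => mul_nonneg (w_nonneg _ _) (hg0 ξ))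

lemma summable_of_summable_two_pow_rpow_mul_integral (hg : Integrable g) (hg0 : ∀ ξ, 0 ≤ g ξ)
    (t : ℝ) (h : Summable fun n : ℕ => ((2 : ℝ) ^ n) ^ t * ∫ ξ, w ξ (2 ^ n) * g ξ) :
    Summable fun k : ℕ => ((2 : ℝ) ^ k) ^ t * ∫ ξ in LPregion k, g ξ := by
  rw [← summable_nat_add_iff 1]
  refine .of_nonneg_of_le (fun k => mul_nonneg (by positivity)
    (setIntegral_nonneg (measurableSet_LPregion _) fun ξ _ => hg0 ξ)) (fun k => ?_)
    (((summable_nat_add_iff 1).mpr h).mul_left (160 / 3))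
  calc ((2 : ℝ) ^ (k + 1)) ^ t * ∫ ξ in LPregion (k + 1), g ξ
      ≤ ((2 : ℝ) ^ (k + 1)) ^ t * (160 / 3 * ∫ ξ, w ξ (2 ^ (k + 1)) * g ξ) := by
        gcongr; exact setIntegral_LPregion_le hg hg0 k.succ_ne_zero
    _ = 160 / 3 * (((2 : ℝ) ^ (k + 1)) ^ t * ∫ ξ, w ξ (2 ^ (k + 1)) * g ξ) := by ring

end

/-- For `0 < s < 1/2` and `f ∈ L²(ℝ)` (given via `f̂`), the dyadic sum
`Σ_N N^{2s} ∫ w(ξ,N)|f̂(ξ)|² dξ` is bounded by a constant depending only on `s`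
times the Besov norm squared `Σ_M M^{2s} ‖P_M f‖²_{L²}`. -/
theorem stmt4 (s : ℝ) (hs : 0 < s) (hs' : s < 1 / 2) :
    ∃ C > (0 : ℝ), ∀ fhat : ℝ → ℂ,
      Integrable (fun ξ : ℝ => ‖fhat ξ‖ ^ 2) →
      ∑' n : ℕ, ((2 : ℝ) ^ n) ^ (2 * s) * ∫ ξ : ℝ, w ξ ((2 : ℝ) ^ n) * ‖fhat ξ‖ ^ 2
        ≤ C * ∑' k : ℕ, ((2 : ℝ) ^ k) ^ (2 * s) * ∫ ξ in LPregion k, ‖fhat ξ‖ ^ 2 := by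
  refine ⟨12, by norm_num, fun fhat hf => ?_⟩
  have hg0 : ∀ ξ, 0 ≤ ‖fhat ξ‖ ^ 2 := fun ξ => by positivity
  have ht : |2 * s| ≤ 1 := abs_le.mpr ⟨by linarith, by linarith⟩
  by_cases hb : Summable fun k : ℕ => ((2 : ℝ) ^ k) ^ (2 * s) * ∫ ξ in LPregion k, ‖fhat ξ‖ ^ 2
  · refine tsum_le_mul_tsum_of_hasSum_le
      (fun k => mul_nonneg (by positivity) (setIntegral_nonneg (measurableSet_LPregion k)
        fun ξ _ => hg0 ξ)) hb (fun n k => by positivity) (fun k F => ?_)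
      (fun n => (hasSum_setIntegral_LPregion (integrable_w_mul hf (by positivity))).mul_left _)
      (two_pow_rpow_mul_setIntegral_le ht hf hg0)
    rw [← Finset.mul_sum]
    linarith [sum_inv_two_pow_natAbs_sub_le k F]
  · have ha := mt (summable_of_summable_two_pow_rpow_mul_integral hf hg0 (2 * s)) hb
    rw [tsum_eq_zero_of_not_summable ha, tsum_eq_zero_of_not_summable hb, mul_zero]
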